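/- Let U and V_n (n ∈ ℕ) be pairwise non-isomorphic selective ultrafilters on ℕ and let W = U-∑_n V_n. If X is a non-principal ultrafilter on ℕ with X ≤_RK W and not X ≡_RK W, then X ≡_RK U. That is, the only non-principal ultrafilters strictly below W in the Rudin-Keisler ordering are the isomorphic copies of U. -/

import Mathlib

/-- The `U`-indexed sum of the ultrafilters `V n`: a set `X ⊆ ℕ × ℕ` belongs to the sum
iff `{n | X(n) ∈ V n} ∈ U`, where `X(n)` is the `n`-th vertical section of `X`. -/
def sumUF (U : Ultrafilter ℕ) (V : ℕ → Ultrafilter ℕ) : Ultrafilter (ℕ × ℕ) :=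
  U.bind fun n => (V n).map fun m => (n, m)

/-- `U` is selective: for every `f : ℕ → ℕ` there is `A ∈ U` on which `f` is
one-to-one or constant. -/
def IsSelective (U : Ultrafilter ℕ) : Prop :=
  ∀ f : ℕ → ℕ, ∃ A ∈ U, Set.InjOn f A ∨ ∃ c, ∀ a ∈ A, f a = c

/-- Two ultrafilters on ℕ are (RK-)isomorphic iff a bijection of ℕ carries one to the other. -/
def RKIso (U V : Ultrafilter ℕ) : Prop :=
  ∃ e : ℕ ≃ ℕ, Ultrafilter.map (⇑e) U = V


/-- Rudin–Keisler reducibility: `F ≤_RK G` iff there is `f : β → α` such that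
for every `a ⊆ α`, `a ∈ F ↔ f ⁻¹' a ∈ G`. -/
def RKle {α β : Type*} (F : Ultrafilter α) (G : Ultrafilter β) : Prop :=
  ∃ f : β → α, ∀ a : Set α, a ∈ F ↔ f ⁻¹' a ∈ G

/-- Rudin–Keisler equivalence. -/
def RKequiv {α β : Type*} (F : Ultrafilter α) (G : Ultrafilter β) : Prop :=
  RKle F G ∧ RKle G F

/-!
Write `X = W.map f` with `W = sumUF U V`, and use selectivity of each `V n` to make the section
`f (n, ·)` injective or constant on some `A n ∈ V n`.

If `U`-almost all sections are constant, `X` is the image of `U` under the section values; this map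
is not constant on a `U`-large set since `X` is non-principal, so by selectivity of `U` it is
injective on one, and `X ≡ U`.

Otherwise `U`-almost all sections are injective, and we show that `f` is injective on a `W`-large
set, i.e. `X ≡ W`. At most one injective section can push `V n` forward to `X`, as two of them would
make the corresponding `V m` and `V n` isomorphic. For the other sections pick `C n` with
`f (n, ·)⁻¹ C n ∈ V n` and `C n ∉ X`. Selective ultrafilters admit diagonal sets `D ∈ U`, so we may
cut each section `n ∈ D` down into `C n` and away from `C k` for all `k < n` in `D`; distinct
sections then have disjoint images.
-/

open Set Filter Function

theorem mem_sumUF {U : Ultrafilter ℕ} {V : ℕ → Ultrafilter ℕ} {s : Set (ℕ × ℕ)} :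
    s ∈ sumUF U V ↔ {n | {m | (n, m) ∈ s} ∈ V n} ∈ U :=
  Iff.rfl

theorem sumUF_pure (p : ℕ) (V : ℕ → Ultrafilter ℕ) :
    sumUF (pure p) V = (V p).map (Prod.mk p) :=
  Ultrafilter.ext fun _ => Iff.rfl

theorem Ultrafilter.map_eq_of_eqOn {α β : Type*} {F : Ultrafilter α} {f g : α → β} {s : Set α}
    (hs : s ∈ F) (h : EqOn f g s) : F.map f = F.map g :=
  Ultrafilter.coe_injective <| by
    simp only [Ultrafilter.coe_map]
    exact Filter.map_congr (mem_of_superset hs h)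

theorem Ultrafilter.exists_mem_notMem_of_ne {α : Type*} {F G : Ultrafilter α} (h : F ≠ G) :
    ∃ s ∈ F, s ∉ G := by
  by_contra! hle
  exact h (Ultrafilter.coe_le_coe.1 hle).symm

theorem Ultrafilter.notMem_of_finite {α : Type*} {F : Ultrafilter α}
    (hF : (F : Filter α) ≤ cofinite) {s : Set α} (hs : s.Finite) : s ∉ F :=
  Ultrafilter.compl_mem_iff_notMem.1 (hF hs.compl_mem_cofinite)

theorem Ultrafilter.exists_preimage_singleton_mem {α β : Type*} [Finite β] (F : Ultrafilter α)
    (f : α → β) : ∃ b, f ⁻¹' {b} ∈ F := by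
  obtain ⟨b, hb⟩ := (F.map f).eq_pure_of_finite
  exact ⟨b, by rw [← Ultrafilter.mem_map, hb]; rfl⟩

theorem rkle_iff_exists_map {α β : Type*} {F : Ultrafilter α} {G : Ultrafilter β} :
    RKle F G ↔ ∃ f : β → α, G.map f = F := by
  simp only [RKle, Ultrafilter.ext_iff, Ultrafilter.mem_map]
  exact exists_congr fun _ => forall_congr' fun _ => Iff.comm

theorem rkequiv_map_of_injOn {α β : Type*} {G : Ultrafilter β} {f : β → α} {s : Set β}
    (hs : s ∈ G) (hf : InjOn f s) : RKequiv (G.map f) G := by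
  have : Nonempty β := ⟨(Ultrafilter.nonempty_of_mem hs).some⟩
  refine ⟨rkle_iff_exists_map.2 ⟨f, rfl⟩, rkle_iff_exists_map.2 ⟨invFunOn f s, ?_⟩⟩
  rw [Ultrafilter.map_map,
    Ultrafilter.map_eq_of_eqOn (f := invFunOn f s ∘ f) (g := id) hs hf.leftInvOn_invFunOn]
  exact Ultrafilter.map_id _

theorem RKIso.symm {F G : Ultrafilter ℕ} : RKIso F G → RKIso G F := by
  rintro ⟨e, rfl⟩
  refine ⟨e.symm, ?_⟩
  rw [Ultrafilter.map_map, e.symm_comp_self]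
  exact Ultrafilter.map_id _

theorem RKIso.trans {F G H : Ultrafilter ℕ} : RKIso F G → RKIso G H → RKIso F H := by
  rintro ⟨e, rfl⟩ ⟨e', rfl⟩
  exact ⟨e.trans e', Ultrafilter.map_map _ _ _⟩

theorem Ultrafilter.exists_mem_infinite_compl (F : Ultrafilter ℕ) : ∃ s ∈ F, sᶜ.Infinite := by
  have hinf : ∀ r < 2, {n | n % 2 = r}.Infinite := fun r hr =>
    infinite_of_forall_exists_gt fun a => ⟨2 * a + 2 + r, by show _ % 2 = r; omega, by omega⟩
  by_cases h : {n | n % 2 = 0} ∈ F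
  · refine ⟨_, h, (hinf 1 one_lt_two).mono fun n hn hn' => ?_⟩
    simp_all
  · refine ⟨_, Ultrafilter.compl_mem_iff_notMem.2 h, ?_⟩
    simpa using hinf 0 two_pos

theorem exists_equiv_eqOn_of_injOn {α : Type*} [Countable α] {f : α → α} {s : Set α}
    (hf : InjOn f s) (hs : sᶜ.Infinite) (hfs : (f '' s)ᶜ.Infinite) : ∃ e : α ≃ α, EqOn e f s := by
  classical
  have := hs.to_subtype
  have := hfs.to_subtype
  obtain ⟨_⟩ := nonempty_denumerable (sᶜ : Set α)
  obtain ⟨_⟩ := nonempty_denumerable ((f '' s)ᶜ : Set α)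
  let e₁ : s ≃ f '' s := Equiv.Set.imageOfInjOn f s hf
  let e₂ : (sᶜ : Set α) ≃ ((f '' s)ᶜ : Set α) := (Denumerable.eqv _).trans (Denumerable.eqv _).symm
  refine ⟨(Equiv.Set.sumCompl s).symm.trans ((e₁.sumCongr e₂).trans (Equiv.Set.sumCompl _)),
    fun x hx => ?_⟩
  simp only [Equiv.trans_apply, Equiv.Set.sumCompl_symm_apply_of_mem hx, Equiv.sumCongr_apply,
    Sum.map_inl, Equiv.Set.sumCompl_apply_inl]
  rfl

-- Shrinking `s` into sets with infinite complements leaves room to extend `f` to a bijection.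
theorem rkIso_map_of_injOn {F : Ultrafilter ℕ} {f : ℕ → ℕ} {s : Set ℕ} (hs : s ∈ F)
    (hf : InjOn f s) : RKIso F (F.map f) := by
  obtain ⟨P, hP, hPc⟩ := F.exists_mem_infinite_compl
  obtain ⟨Q, hQ, hQc⟩ := (F.map f).exists_mem_infinite_compl
  set t := s ∩ P ∩ f ⁻¹' Q
  have ht : t ∈ F := inter_mem (inter_mem hs hP) hQ
  have hts : t ⊆ s := fun x hx => hx.1.1
  have htc : Pᶜ ⊆ tᶜ := fun x hx hxt => hx hxt.1.2
  have hftc : Qᶜ ⊆ (f '' t)ᶜ := by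
    rintro y hy ⟨x, hxt, rfl⟩
    exact hy hxt.2
  obtain ⟨e, he⟩ := exists_equiv_eqOn_of_injOn (hf.mono hts) (hPc.mono htc) (hQc.mono hftc)
  exact ⟨e, Ultrafilter.map_eq_of_eqOn ht he⟩

namespace IsSelective

variable {U : Ultrafilter ℕ}

theorem exists_injOn (hU : IsSelective U) {f : ℕ → ℕ} (hf : ∀ c, f ⁻¹' {c} ∉ U) :
    ∃ A ∈ U, InjOn f A := by
  obtain ⟨A, hA, hinj | ⟨c, hc⟩⟩ := hU f
  · exact ⟨A, hA, hinj⟩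
  · exact absurd (mem_of_superset hA hc) (hf c)

variable (hU : IsSelective U) (hcof : (U : Filter ℕ) ≤ cofinite)
include hU hcof

theorem exists_finite_diff {G : ℕ → Set ℕ} (hG : ∀ n, G n ∈ U) :
    ∃ A ∈ U, ∀ n, (A \ G n).Finite := by
  classical
  -- `rank m` is the first `n` with `m ∉ G n ∩ Ioi n`; its fibres avoid `U`-large sets.
  have hex : ∀ m, ∃ n, ¬(m ∈ G n ∧ n < m) := fun m => ⟨m, fun h => h.2.false⟩
  let rank m := Nat.find (hex m)
  have hrank : ∀ {n m}, n < rank m → m ∈ G n := fun h =>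
    (not_not.1 ((Nat.lt_find_iff _ _).1 h _ le_rfl)).1
  obtain ⟨A, hA, hinj⟩ := hU.exists_injOn (f := rank) fun c hc => by
    have hIoi : Ioi c ∈ U := compl_Iic (a := c) ▸
      Ultrafilter.compl_mem_iff_notMem.2 (Ultrafilter.notMem_of_finite hcof (finite_Iic c))
    obtain ⟨m, rfl, hmG, hm⟩ := Ultrafilter.nonempty_of_mem (inter_mem hc (inter_mem (hG c) hIoi))
    exact Nat.find_spec (hex m) ⟨hmG, hm⟩
  refine ⟨A, hA, fun n => ?_⟩
  have hfin : (A ∩ rank ⁻¹' Iic n).Finite :=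
    Finite.of_finite_image ((finite_Iic n).subset (image_subset_iff.2 fun _ h => h.2))
      (hinj.mono inter_subset_left)
  exact hfin.subset fun m hm => ⟨hm.1, not_lt.1 fun h => hm.2 (hrank h)⟩

theorem exists_sparse (φ : ℕ → ℕ) : ∃ D ∈ U, ∀ k ∈ D, ∀ m ∈ D, k < m → φ k < m := by
  let ψ k := (Finset.range (k + 1)).sup φ + k
  have hψ : Monotone ψ := fun a b hab =>
    add_le_add (Finset.sup_mono (Finset.range_subset_range.2 (by omega))) hab
  have hφψ : ∀ k, φ k ≤ ψ k := fun k =>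
    le_add_right (Finset.le_sup (Finset.self_mem_range_succ k))
  -- Points of `[b (j + 2), ∞)` exceed `ψ` on `[0, b (j + 1))`. Selectivity picks at most one
  -- point from each interval `[b j, b (j + 1))`, and a parity class keeps the picks two apart.
  let b j := (fun x => ψ x + 1)^[j] 0
  have hb_succ : ∀ j, b (j + 1) = ψ (b j) + 1 := fun j => iterate_succ_apply' _ _ _
  have hb : StrictMono b := strictMono_nat_of_lt_succ fun j => by
    rw [hb_succ]
    exact Nat.lt_succ_of_le (le_add_left le_rfl)
  choose idx hidx using fun m =>
    hb.exists_between_of_tendsto_atTop hb.tendsto_atTop (x := m + 1) (by simp [b])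
  obtain ⟨B, hB, hinj⟩ := hU.exists_injOn (f := idx) fun j =>
    Ultrafilter.notMem_of_finite hcof <| (finite_Iio (b (j + 1))).subset fun m hm =>
      Nat.lt_of_succ_le (hm ▸ (hidx m).2)
  obtain ⟨r, hr⟩ := U.exists_preimage_singleton_mem fun m => (idx m : ZMod 2)
  refine ⟨B ∩ _, inter_mem hB hr, fun k hk m hm hkm => ?_⟩
  have hle : idx k < idx m + 1 := hb.lt_iff_lt.1 (by linarith [hidx k, hidx m])
  have hne : idx k ≠ idx m := fun h => hkm.ne (hinj hk.1 hm.1 h)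
  have hpar : idx k % 2 = idx m % 2 :=
    (ZMod.natCast_eq_natCast_iff' _ _ 2).1 (hk.2.trans hm.2.symm)
  have hgap : idx k + 2 ≤ idx m := by omega
  calc φ k ≤ ψ k := hφψ k
    _ ≤ ψ (b (idx k + 1)) := hψ (by linarith [hidx k])
    _ < b (idx k + 2) := by rw [hb_succ (idx k + 1)]; exact Nat.lt_succ_self _
    _ ≤ b (idx m) := hb.monotone hgap
    _ ≤ m := by linarith [hidx m]

theorem exists_diagonal {G : ℕ → Set ℕ} (hG : ∀ n, G n ∈ U) :
    ∃ D ∈ U, ∀ k ∈ D, ∀ m ∈ D, k < m → m ∈ G k := by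
  obtain ⟨A, hA, hfin⟩ := hU.exists_finite_diff hcof hG
  choose φ hφ using fun n => (hfin n).bddAbove
  obtain ⟨D, hD, hsparse⟩ := hU.exists_sparse hcof φ
  refine ⟨D ∩ A, inter_mem hD hA, fun k hk m hm hkm => ?_⟩
  by_contra h
  exact (hsparse k hk.1 m hm.1 hkm).not_ge (hφ k ⟨hm.2, h⟩)

end IsSelective

section Sections

variable {U : Ultrafilter ℕ} {V : ℕ → Ultrafilter ℕ} {A : ℕ → Set ℕ}

theorem exists_sumUF_map_eq_of_const_sections {α : Type*} {f : ℕ × ℕ → α} (hA : ∀ n, A n ∈ V n)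
    (hS : {n | ∃ c, ∀ m ∈ A n, f (n, m) = c} ∈ U) : ∃ g : ℕ → α, (sumUF U V).map f = U.map g := by
  have : Nonempty α := ⟨f (0, 0)⟩
  choose! g hg using fun n (hn : n ∈ {n | ∃ c, ∀ m ∈ A n, f (n, m) = c}) => hn
  refine ⟨g, Ultrafilter.ext fun a => ?_⟩
  rw [Ultrafilter.mem_map, Ultrafilter.mem_map, mem_sumUF]
  refine congr_sets ?_
  filter_upwards [hS] with n hn
  calc {m | f (n, m) ∈ a} ∈ V n ↔ ∀ᶠ _ in (V n : Filter ℕ), g n ∈ a :=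
        eventually_congr <| by
          filter_upwards [hA n] with m hm
          rw [hg n hn m hm]
    _ ↔ g n ∈ a := eventually_const

theorem exists_injOn_of_sections_ne {α : Type*} (hU : IsSelective U)
    (hcof : (U : Filter ℕ) ≤ cofinite) {f : ℕ × ℕ → α} (hA : ∀ n, A n ∈ V n) {T : Set ℕ}
    (hT : T ∈ U) (hinj : ∀ n ∈ T, InjOn (fun m => f (n, m)) (A n))
    (hne : ∀ n ∈ T, (V n).map (fun m => f (n, m)) ≠ (sumUF U V).map f) :
    ∃ Ω ∈ sumUF U V, InjOn f Ω := by
  have hC : ∀ n, ∃ C : Set α,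
      (n ∈ T → (fun m => f (n, m)) ⁻¹' C ∈ V n) ∧ C ∉ (sumUF U V).map f := by
    intro n
    by_cases hn : n ∈ T
    · obtain ⟨C, h1, h2⟩ := Ultrafilter.exists_mem_notMem_of_ne (hne n hn)
      exact ⟨C, fun _ => h1, h2⟩
    · exact ⟨∅, fun h => absurd h hn, Ultrafilter.empty_notMem⟩
  choose C hCV hCX using hC
  obtain ⟨D, hD, hdiag⟩ := hU.exists_diagonal hcof
    (G := fun k => {n | (fun m => f (n, m)) ⁻¹' (C k)ᶜ ∈ V n})
    fun k => Ultrafilter.compl_mem_iff_notMem.2 (hCX k)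
  let Ω : Set (ℕ × ℕ) :=
    {q | q.1 ∈ D ∩ T ∧ q.2 ∈ A q.1 ∧ f q ∈ C q.1 ∧ ∀ k ∈ D, k < q.1 → f q ∉ C k}
  refine ⟨Ω, mem_sumUF.2 (mem_of_superset (inter_mem hD hT) fun n hn => ?_), ?_⟩
  · have hfin : {k | k ∈ D ∧ k < n}.Finite := (finite_Iio n).subset fun k hk => hk.2
    filter_upwards [hA n, hCV n hn.2, (biInter_mem hfin).2 fun k hk => hdiag k hk.1 n hn.1 hk.2]
      with m h1 h2 h3
    exact ⟨hn, h1, h2, fun k hk hkn => mem_iInter₂.1 h3 k ⟨hk, hkn⟩⟩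
  · rintro ⟨n, y⟩ ⟨hn, hy, hyC, hyC'⟩ ⟨n', y'⟩ ⟨hn', hy', hy'C, hy'C'⟩ hf
    rcases lt_trichotomy n n' with h | rfl | h
    · exact absurd (hf ▸ hyC) (hy'C' n hn.1 h)
    · exact congrArg _ (hinj n hn.2 hy hy' hf)
    · exact absurd (hf ▸ hy'C) (hyC' n' hn'.1 h)

theorem exists_injOn_of_injOn_sections (hU : IsSelective U)
    (hVV : ∀ m n, m ≠ n → ¬RKIso (V m) (V n)) {f : ℕ × ℕ → ℕ} (hA : ∀ n, A n ∈ V n)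
    {T : Set ℕ} (hT : T ∈ U) (hinj : ∀ n ∈ T, InjOn (fun m => f (n, m)) (A n)) :
    ∃ Ω ∈ sumUF U V, InjOn f Ω := by
  rcases U.le_cofinite_or_eq_pure with hcof | ⟨p, rfl⟩
  · let P := {n ∈ T | (V n).map (fun m => f (n, m)) = (sumUF U V).map f}
    have hP : P.Subsingleton := fun m hm n hn => by
      by_contra hmn
      refine hVV m n hmn ((rkIso_map_of_injOn (hA m) (hinj m hm.1)).trans ?_)
      rw [hm.2, ← hn.2]
      exact (rkIso_map_of_injOn (hA n) (hinj n hn.1)).symm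
    have hTP : T \ P ∈ U := sdiff_mem hT
      (Ultrafilter.compl_mem_iff_notMem.2 (Ultrafilter.notMem_of_finite hcof hP.finite))
    exact exists_injOn_of_sections_ne hU hcof hA hTP (fun n hn => hinj n hn.1)
      fun n hn h => hn.2 ⟨hn.1, h⟩
  · refine ⟨Prod.mk p '' A p, ?_, (hinj p hT).image_of_comp⟩
    rw [sumUF_pure]
    exact Ultrafilter.mem_map.2 (mem_of_superset (hA p) (subset_preimage_image _ _))

end Sections

theorem stmt4_general (U : Ultrafilter ℕ) (V : ℕ → Ultrafilter ℕ)
    (hUsel : IsSelective U) (hVsel : ∀ n, IsSelective (V n))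
    (hVV : ∀ m n, m ≠ n → ¬ RKIso (V m) (V n))
    (X : Ultrafilter ℕ) (hXnp : ∀ A ∈ X, Set.Infinite A)
    (hle : RKle X (sumUF U V)) (hne : ¬ RKequiv X (sumUF U V)) :
    RKequiv X U := by
  obtain ⟨f, rfl⟩ := rkle_iff_exists_map.1 hle
  choose A hA hsec using fun n => hVsel n fun m => f (n, m)
  by_cases hS : {n | ∃ c, ∀ m ∈ A n, f (n, m) = c} ∈ U
  · obtain ⟨g, hg⟩ := exists_sumUF_map_eq_of_const_sections hA hS
    rw [hg] at hXnp ⊢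
    obtain ⟨B, hB, hinj⟩ := hUsel.exists_injOn fun c hc => hXnp {c} hc (finite_singleton c)
    exact rkequiv_map_of_injOn hB hinj
  · obtain ⟨Ω, hΩ, hinj⟩ := exists_injOn_of_injOn_sections hUsel hVV hA
      (Ultrafilter.compl_mem_iff_notMem.2 hS) fun n hn => (hsec n).resolve_right hn
    exact absurd (rkequiv_map_of_injOn hΩ hinj) hne

theorem stmt4 (U : Ultrafilter ℕ) (V : ℕ → Ultrafilter ℕ)
    (hUsel : IsSelective U) (hVsel : ∀ n, IsSelective (V n))
    (hUV : ∀ n, ¬ RKIso U (V n))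
    (hVV : ∀ m n, m ≠ n → ¬ RKIso (V m) (V n))
    (X : Ultrafilter ℕ) (hXnp : ∀ A ∈ X, Set.Infinite A)
    (hle : RKle X (sumUF U V)) (hne : ¬ RKequiv X (sumUF U V)) :
    RKequiv X U :=
  stmt4_general U V hUsel hVsel hVV X hXnp hle hne
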